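/- For every finite simple graph G there exists a graph H' such that α(G ⊠ H') = α*(G) · α(H'). Specifically, if f(v) = n(v)/N is an optimal rational fractional packing of G with nonnegative integers n(v), N, then H' = Blup(Ḡ, n), the blow-up of the complement of G by the weights n, achieves equality. -/

import Mathlib

/-!
Two bounds meet. For any `H`, an independent set `S` of `G ⊠ H` has fibres `S_v` whose sizes,
divided by `α(H)`, form a fractional packing of `G`: the part of `S` over a clique of `G` projects
injectively onto an independent set of `H`. Hence `α(G ⊠ H) ≤ α*(G) α(H)`.
Conversely, for `H = Blup(Ḡ, n)` an independent set of `H` lies over a clique of `G`, so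
`α(H) ≤ N`, while the diagonal `{(v, (v, i))}` is independent in `G ⊠ H` and has
`∑ n(v) = α*(G) N ≥ α*(G) α(H)` elements.
-/

open Finset

namespace SimpleGraph

variable {V W : Type*}

/-- The strong graph product. -/
def strongProd (G : SimpleGraph V) (H : SimpleGraph W) : SimpleGraph (V × W) where
  Adj x y := x ≠ y ∧ (x.1 = y.1 ∨ G.Adj x.1 y.1) ∧ (x.2 = y.2 ∨ H.Adj x.2 y.2)
  symm := ⟨by
    rintro x y ⟨hne, h1, h2⟩
    exact ⟨hne.symm, h1.imp Eq.symm (fun h => G.adj_symm h), h2.imp Eq.symm (fun h => H.adj_symm h)⟩⟩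
  loopless := ⟨by rintro x ⟨hne, -, -⟩; exact hne rfl⟩

/-- The disjunctive graph product. -/
def disjProd (G : SimpleGraph V) (H : SimpleGraph W) : SimpleGraph (V × W) where
  Adj x y := G.Adj x.1 y.1 ∨ H.Adj x.2 y.2
  symm := ⟨fun _ _ h => h.imp (fun h => G.adj_symm h) (fun h => H.adj_symm h)⟩
  loopless := ⟨fun x h => h.elim (G.loopless.irrefl x.1) (H.loopless.irrefl x.2)⟩

/-- A finite set of vertices is independent if no two of its members are adjacent. -/
def IsIndep (G : SimpleGraph V) (s : Finset V) : Prop :=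
  ∀ ⦃v⦄, v ∈ s → ∀ ⦃w⦄, w ∈ s → ¬ G.Adj v w

/-- The independence number. -/
noncomputable def alpha (G : SimpleGraph V) [Fintype V] : ℕ :=
  sSup {n | ∃ s : Finset V, G.IsIndep s ∧ s.card = n}

/-- The fractional packing number. -/
noncomputable def alphaStar (G : SimpleGraph V) [Fintype V] : ℝ :=
  sSup {x | ∃ t : V → ℝ, (∀ v, 0 ≤ t v) ∧
    (∀ C : Finset V, G.IsClique (C : Set V) → ∑ v ∈ C, t v ≤ 1) ∧ x = ∑ v, t v}

/-- The Lovász number. -/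
noncomputable def lovTheta (G : SimpleGraph V) [Fintype V] : ℝ :=
  sSup {x | ∃ B : Matrix V V ℝ, B.PosSemidef ∧ B.trace = 1 ∧
    (∀ v w, G.Adj v w → B v w = 0) ∧ x = ∑ v, ∑ w, B v w}

/-- Schrijver's variant of the Lovász number. -/
noncomputable def thetaMinus (G : SimpleGraph V) [Fintype V] : ℝ :=
  sSup {x | ∃ B : Matrix V V ℝ, B.PosSemidef ∧ B.trace = 1 ∧ (∀ v w, 0 ≤ B v w) ∧
    (∀ v w, G.Adj v w → B v w = 0) ∧ x = ∑ v, ∑ w, B v w}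

/-- Szegedy's variant of the Lovász number. -/
noncomputable def thetaPlus (G : SimpleGraph V) [Fintype V] : ℝ :=
  sSup {x | ∃ B : Matrix V V ℝ, B.PosSemidef ∧ B.trace = 1 ∧
    (∀ v w, G.Adj v w → B v w ≤ 0) ∧ x = ∑ v, ∑ w, B v w}

/-- The clique covering number. -/
noncomputable def cliqueCoverNum (G : SimpleGraph V) [Fintype V] : ℕ :=
  sInf {n | ∃ C : Fin n → Finset V, (∀ i, G.IsClique (C i : Set V)) ∧ ∀ v, ∃ i, v ∈ C i}

/-- The blow-up of a graph along integer vertex weights. -/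
def blup (G : SimpleGraph V) (p : V → ℕ) : SimpleGraph (Σ v, Fin (p v)) where
  Adj x y := G.Adj x.1 y.1
  symm := ⟨fun _ _ h => G.adj_symm h⟩
  loopless := ⟨fun x h => G.loopless.irrefl x.1 h⟩

/-- The weighted independence number (integer weights). -/
noncomputable def alphaWNat (G : SimpleGraph V) [Fintype V] (p : V → ℕ) : ℕ :=
  sSup {n | ∃ s : Finset V, G.IsIndep s ∧ n = ∑ v ∈ s, p v}

/-- The weighted independence number (real weights). -/
noncomputable def alphaW (G : SimpleGraph V) [Fintype V] (p : V → ℝ) : ℝ :=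
  sSup {x | ∃ s : Finset V, G.IsIndep s ∧ x = ∑ v ∈ s, p v}

end SimpleGraph

open SimpleGraph
open scoped RealInnerProductSpace

namespace SimpleGraph

variable {V W : Type*}

theorem IsIndep.card_le_alpha [Fintype V] {G : SimpleGraph V} {s : Finset V} (h : G.IsIndep s) :
    s.card ≤ G.alpha := by
  refine le_csSup ⟨Fintype.card V, ?_⟩ ⟨s, h, rfl⟩
  rintro _ ⟨u, -, rfl⟩
  exact u.card_le_univ

theorem alpha_le [Fintype V] {G : SimpleGraph V} {m : ℕ}
    (h : ∀ s : Finset V, G.IsIndep s → s.card ≤ m) : G.alpha ≤ m :=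
  csSup_le ⟨0, ∅, by simp [IsIndep], rfl⟩ fun _ ⟨s, hs, hm⟩ => hm ▸ h s hs

theorem exists_isIndep_card_eq_alpha [Fintype V] (G : SimpleGraph V) :
    ∃ s : Finset V, G.IsIndep s ∧ s.card = G.alpha :=
  Nat.sSup_mem (s := {n | ∃ s : Finset V, G.IsIndep s ∧ s.card = n})
    ⟨0, ∅, by simp [IsIndep], rfl⟩
    ⟨Fintype.card V, fun _ ⟨s, _, hs⟩ => hs ▸ s.card_le_univ⟩

theorem sum_le_alphaStar [Fintype V] {G : SimpleGraph V} {t : V → ℝ} (ht : ∀ v, 0 ≤ t v)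
    (hC : ∀ C : Finset V, G.IsClique (C : Set V) → ∑ v ∈ C, t v ≤ 1) :
    ∑ v, t v ≤ G.alphaStar := by
  refine le_csSup ⟨Fintype.card V, ?_⟩ ⟨t, ht, hC, rfl⟩
  rintro _ ⟨u, -, huC, rfl⟩
  calc ∑ v, u v ≤ ∑ _v : V, (1 : ℝ) :=
        sum_le_sum fun v _ => by simpa using huC {v} (by simp)
    _ = Fintype.card V := by simp

theorem sum_le_alphaStar_mul [Fintype V] {G : SimpleGraph V} {w : V → ℝ} {b : ℝ}
    (hw : ∀ v, 0 ≤ w v)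
    (hC : ∀ C : Finset V, G.IsClique (C : Set V) → ∑ v ∈ C, w v ≤ b) :
    ∑ v, w v ≤ G.alphaStar * b := by
  have hsingle (v : V) : w v ≤ b := by simpa using hC {v} (by simp)
  rcases (show 0 ≤ b by simpa using hC ∅ (by simp)).eq_or_lt with rfl | hb
  · simp [fun v => le_antisymm (hsingle v) (hw v)]
  · have hscaled : ∑ v, w v / b ≤ G.alphaStar :=
      sum_le_alphaStar (fun v => div_nonneg (hw v) hb.le) fun C hC' => by
        rw [← sum_div, div_le_one hb]
        exact hC C hC'
    rwa [← sum_div, div_le_iff₀ hb] at hscaled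

theorem IsIndep.card_filter_fst_mem_le_alpha [Fintype V] [Fintype W] [DecidableEq V]
    [DecidableEq W] {G : SimpleGraph V} {H : SimpleGraph W} {S : Finset (V × W)}
    (hS : (G.strongProd H).IsIndep S) {C : Finset V} (hC : G.IsClique (C : Set V)) :
    (S.filter fun p => p.1 ∈ C).card ≤ H.alpha := by
  set T := S.filter fun p => p.1 ∈ C
  have hsep {p q : V × W} (hp : p ∈ T) (hq : q ∈ T) (hne : p ≠ q) :
      p.2 ≠ q.2 ∧ ¬ H.Adj p.2 q.2 := by
    rw [mem_filter] at hp hq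
    have hfst : p.1 = q.1 ∨ G.Adj p.1 q.1 := by
      by_cases h : p.1 = q.1
      · exact Or.inl h
      · exact Or.inr (hC hp.2 hq.2 h)
    exact ⟨fun h => hS hp.1 hq.1 ⟨hne, hfst, Or.inl h⟩,
      fun h => hS hp.1 hq.1 ⟨hne, hfst, Or.inr h⟩⟩
  have hinj : Set.InjOn Prod.snd (T : Set (V × W)) :=
    fun p hp q hq h => by_contra fun hne => (hsep hp hq hne).1 h
  have hindep : H.IsIndep (T.image Prod.snd) := by
    simp only [IsIndep, mem_image]
    rintro _ ⟨p, hp, rfl⟩ _ ⟨q, hq, rfl⟩ hadj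
    exact (hsep hp hq fun h => H.loopless.irrefl _ (h ▸ hadj)).2 hadj
  exact card_image_of_injOn hinj ▸ hindep.card_le_alpha

theorem alpha_strongProd_le [Fintype V] [Fintype W] (G : SimpleGraph V) (H : SimpleGraph W) :
    ((G.strongProd H).alpha : ℝ) ≤ G.alphaStar * H.alpha := by
  classical
  obtain ⟨S, hS, hcard⟩ := (G.strongProd H).exists_isIndep_card_eq_alpha
  have hfibres : (S.card : ℝ) = ∑ v, ((S.filter fun p => p.1 = v).card : ℝ) := by
    exact_mod_cast card_eq_sum_card_fiberwise (f := Prod.fst) fun _ _ => mem_univ _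
  rw [← hcard, hfibres]
  refine sum_le_alphaStar_mul (fun _ => Nat.cast_nonneg _) fun C hC => ?_
  have hoverC :
      (S.filter fun p => p.1 ∈ C).card = ∑ v ∈ C, (S.filter fun p => p.1 = v).card := by
    rw [card_eq_sum_card_fiberwise (s := S.filter fun p => p.1 ∈ C) (f := Prod.fst) (t := C)
      fun p hp => (mem_filter.1 hp).2]
    refine sum_congr rfl fun v hv => ?_
    rw [filter_filter]
    exact congrArg card (filter_congr fun p _ => and_iff_right_of_imp fun h => h ▸ hv)
  exact_mod_cast hoverC ▸ hS.card_filter_fst_mem_le_alpha hC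

theorem card_le_sum_image_fst [DecidableEq V] {p : V → ℕ} (s : Finset (Σ v, Fin (p v))) :
    s.card ≤ ∑ v ∈ s.image Sigma.fst, p v := by
  calc s.card ≤ ((s.image Sigma.fst).sigma fun v => (univ : Finset (Fin (p v)))).card :=
        card_le_card fun x hx => mem_sigma.2 ⟨mem_image_of_mem _ hx, mem_univ _⟩
    _ = ∑ v ∈ s.image Sigma.fst, p v := by simp [card_sigma]

theorem IsIndep.isClique_image_fst [DecidableEq V] {G : SimpleGraph V} {p : V → ℕ}
    {s : Finset (Σ v, Fin (p v))} (hs : (Gᶜ.blup p).IsIndep s) :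
    G.IsClique (s.image Sigma.fst : Set V) := by
  simp only [coe_image]
  rintro _ ⟨x, hx, rfl⟩ _ ⟨y, hy, rfl⟩ hne
  by_contra hadj
  exact hs hx hy ((compl_adj G x.1 y.1).2 ⟨hne, hadj⟩)

theorem alpha_blup_compl_le [Fintype V] {G : SimpleGraph V} {p : V → ℕ} {N : ℕ}
    (hC : ∀ C : Finset V, G.IsClique (C : Set V) → ∑ v ∈ C, p v ≤ N) :
    (Gᶜ.blup p).alpha ≤ N := by
  classical
  exact alpha_le fun s hs => (card_le_sum_image_fst s).trans (hC _ hs.isClique_image_fst)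

theorem sum_le_alpha_strongProd_blup_compl [Fintype V] (G : SimpleGraph V) (p : V → ℕ) :
    ∑ v, p v ≤ (G.strongProd (Gᶜ.blup p)).alpha := by
  let diag : (Σ v, Fin (p v)) ↪ V × Σ v, Fin (p v) :=
    ⟨fun x => (x.1, x), fun _ _ h => congrArg Prod.snd h⟩
  have hindep : (G.strongProd (Gᶜ.blup p)).IsIndep (univ.map diag) := by
    simp only [IsIndep, mem_map]
    rintro _ ⟨x, -, rfl⟩ _ ⟨y, -, rfl⟩ ⟨hne, hG, hxy | hcompl⟩
    · exact hne (congrArg diag (hxy : x = y))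
    · exact (compl_adj G x.1 y.1).1 hcompl |>.elim fun h h' => hG.elim h h'
  simpa [Fintype.card_sigma] using hindep.card_le_alpha

end SimpleGraph

theorem rosenfeld_eq_blup {V : Type*} [Fintype V] (G : SimpleGraph V)
    (n : V → ℕ) (N : ℕ) (hN : 0 < N)
    (hfeas : ∀ C : Finset V, G.IsClique (C : Set V) → ∑ v ∈ C, (n v : ℝ) / N ≤ 1)
    (hopt : G.alphaStar = (∑ v, (n v : ℝ)) / N) :
    ((G.strongProd (Gᶜ.blup n)).alpha : ℝ) = G.alphaStar * ((Gᶜ.blup n).alpha : ℝ) := by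
  have hN' : (0 : ℝ) < N := by exact_mod_cast hN
  have hcliques (C : Finset V) (hC : G.IsClique (C : Set V)) : ∑ v ∈ C, n v ≤ N := by
    have h := hfeas C hC
    rw [← sum_div, div_le_one hN'] at h
    exact_mod_cast h
  have hblup : ((Gᶜ.blup n).alpha : ℝ) ≤ N := by exact_mod_cast alpha_blup_compl_le hcliques
  have hdiag : (∑ v, (n v : ℝ)) ≤ (G.strongProd (Gᶜ.blup n)).alpha := by
    exact_mod_cast sum_le_alpha_strongProd_blup_compl G n
  have hαN : G.alphaStar * N = ∑ v, (n v : ℝ) := by rw [hopt, div_mul_cancel₀ _ hN'.ne']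
  refine le_antisymm (alpha_strongProd_le G _) ?_
  calc G.alphaStar * (Gᶜ.blup n).alpha
      ≤ G.alphaStar * N := mul_le_mul_of_nonneg_left hblup (hopt ▸ by positivity)
    _ = ∑ v, (n v : ℝ) := hαN
    _ ≤ _ := hdiag
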